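/- arXiv:1712.08520 — 2 statements merged into one kernel-verified Lean document; each statement's English description precedes it below -/
import Mathlib

section
/- Let (S₁,…,S_k) be an ordered set partition of a subset S ⊆ {1,…,n}, and let [S₁,…,S_k] = {x ∈ V₀ⁿ : x_j = 0 for all j ∉ S, and x_{S₁∪⋯∪S_i} ≥ 0 for i = 1,…,k−1} (note that then automatically x_S = 0). Its dual cone is [S₁,…,S_k]* = {y ∈ V₀ⁿ : y is constant on each block S_i, say with value t_i on S_i, the values satisfy t₁ ≥ t₂ ≥ ⋯ ≥ t_k, and the coordinates of y outside S are arbitrary}. -/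
open scoped Pointwise Classical

namespace PlatesPaper

/-- The union of a list of finite sets. -/
def lUnion {n : ℕ} (L : List (Finset (Fin n))) : Finset (Fin n) :=
  L.foldr (· ∪ ·) ∅

/-- `L` is an ordered set partition of `J`: a list of pairwise disjoint nonempty
finite sets whose union is `J`. -/
def IsOSP {n : ℕ} (J : Finset (Fin n)) (L : List (Finset (Fin n))) : Prop :=
  (∀ B ∈ L, B.Nonempty) ∧ L.Pairwise Disjoint ∧ lUnion L = J

/-- The plate of an ordered set partition `L` (of a subset `J = lUnion L` of `{1,…,n}`):
the set of `x ∈ V₀ⁿ` vanishing outside `J`, with `x_J = 0`, and such that the partial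
sums over the unions of the first `i` blocks are nonnegative for `i = 1,…,len(L)−1`.
(For an ordered set partition of the whole of `{1,…,n}` the first two conditions are
equivalent to `x ∈ V₀ⁿ`.) -/
def plate {n : ℕ} (L : List (Finset (Fin n))) : Set (Fin n → ℝ) :=
  {x | (∑ i, x i = 0) ∧ (∀ j, j ∉ lUnion L → x j = 0) ∧ (∑ j ∈ lUnion L, x j = 0) ∧
    ∀ i : ℕ, 0 < i → i < L.length → 0 ≤ ∑ j ∈ lUnion (L.take i), x j}

/-- `ℚ`-valued indicator function of a set of points of `ℝⁿ`. -/
noncomputable def ind {n : ℕ} (S : Set (Fin n → ℝ)) : (Fin n → ℝ) → ℚ :=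
  fun x => if x ∈ S then 1 else 0

/-- The index of the block of `L` containing the element `a`. -/
def blockIdx {n : ℕ} (L : List (Finset (Fin n))) (a : Fin n) : ℕ :=
  L.findIdx fun B => decide (a ∈ B)

/-- The index of the block of `L` containing the set `B`. -/
def subIdx {n : ℕ} (L : List (Finset (Fin n))) (B : Finset (Fin n)) : ℕ :=
  L.findIdx fun C => decide (B ⊆ C)

/-- `B` is contained in one of the blocks of `L`. -/
def memBlock {n : ℕ} (L : List (Finset (Fin n))) (B : Finset (Fin n)) : Prop :=
  ∃ j < L.length, B ⊆ L.getD j ∅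

lemma mem_lUnion {n : ℕ} {M : List (Finset (Fin n))} {a : Fin n} :
    a ∈ lUnion M ↔ ∃ B ∈ M, a ∈ B := by
  induction M with
  | nil => simp [lUnion]
  | cons B M ih => simp [lUnion] at ih ⊢; rw [ih]

lemma pairwise_getElem {n : ℕ} {L : List (Finset (Fin n))} (h : L.Pairwise Disjoint)
    {i j : ℕ} (hij : i < j) (hj : j < L.length) :
    Disjoint (L.getD i ∅) (L.getD j ∅) := by
  rw [List.getD_eq_getElem _ _ (hij.trans hj), List.getD_eq_getElem _ _ hj]
  exact List.pairwise_iff_getElem.mp h i j (hij.trans hj) hj hij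

lemma mem_lUnion_take {n : ℕ} {L : List (Finset (Fin n))} (h : L.Pairwise Disjoint)
    {i : ℕ} (hi : i < L.length) {a : Fin n} (ha : a ∈ L.getD i ∅) (m : ℕ) :
    a ∈ lUnion (L.take m) ↔ i < m := by
  rw [mem_lUnion]
  constructor
  · rintro ⟨B, hB, haB⟩
    obtain ⟨j, hj, rfl⟩ := List.mem_iff_getElem.mp hB
    rw [List.getElem_take] at haB
    have hjlen : j < L.length := by
      have := hj; rw [List.length_take] at this; omega
    by_contra hmi
    push_neg at hmi
    have hjm : j < m := by have := hj; rw [List.length_take] at this; omega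
    have hji : j < i := lt_of_lt_of_le hjm hmi
    have := pairwise_getElem h hji hi
    rw [List.getD_eq_getElem _ _ hjlen] at this
    exact (Finset.disjoint_left.mp this haB) ha
  · intro him
    refine ⟨L.getD i ∅, ?_, ha⟩
    rw [List.getD_eq_getElem _ _ hi]
    rw [List.mem_iff_getElem]
    refine ⟨i, by rw [List.length_take]; omega, ?_⟩
    rw [List.getElem_take]

lemma sum_take_succ {n : ℕ} {L : List (Finset (Fin n))} (h : L.Pairwise Disjoint)
    {m : ℕ} (hm : m < L.length) (f : Fin n → ℝ) :
    ∑ j ∈ lUnion (L.take (m+1)), f j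
      = ∑ j ∈ lUnion (L.take m), f j + ∑ j ∈ L.getD m ∅, f j := by
  have htake : L.take (m+1) = L.take m ++ [L.getD m ∅] := by
    rw [List.take_succ, List.getD_eq_getElem _ _ hm, List.getElem?_eq_getElem hm]
    rfl
  have hlu : lUnion (L.take (m+1)) = lUnion (L.take m) ∪ L.getD m ∅ := by
    rw [htake]
    have : ∀ (A B : List (Finset (Fin n))), lUnion (A ++ B) = lUnion A ∪ lUnion B := by
      intro A B
      induction A with
      | nil => simp [lUnion]
      | cons C A ih => simp [lUnion] at ih ⊢; rw [ih]
    rw [this]; simp [lUnion]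
  have hdisj : Disjoint (lUnion (L.take m)) (L.getD m ∅) := by
    rw [Finset.disjoint_left]
    intro a ha
    rw [mem_lUnion] at ha
    obtain ⟨B, hB, haB⟩ := ha
    obtain ⟨j, hj, rfl⟩ := List.mem_iff_getElem.mp hB
    rw [List.getElem_take] at haB
    have hjm : j < m := by have := hj; rw [List.length_take] at this; omega
    have hjlen : j < L.length := hjm.trans hm
    have := pairwise_getElem h hjm hm
    rw [List.getD_eq_getElem _ _ hjlen] at this
    exact Finset.disjoint_left.mp this haB
  rw [hlu, Finset.sum_union hdisj]

lemma sum_take_eq {n : ℕ} {L : List (Finset (Fin n))} (h : L.Pairwise Disjoint)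
    (f : Fin n → ℝ) : ∀ m, m ≤ L.length →
    ∑ j ∈ lUnion (L.take m), f j = ∑ i ∈ Finset.range m, ∑ j ∈ L.getD i ∅, f j := by
  intro m
  induction m with
  | zero => simp [lUnion]
  | succ m ih =>
    intro hm
    rw [sum_take_succ h (by omega) f, ih (by omega), Finset.sum_range_succ]

lemma abel_ineq (t P : ℕ → ℝ) : ∀ k : ℕ, P 0 = 0 →
    (∀ i, 0 < i → i ≤ k → 0 ≤ P i) →
    (∀ i j, i ≤ j → j < k → t j ≤ t i) →
    t (k-1) * P k ≤ ∑ i ∈ Finset.range k, t i * (P (i+1) - P i) := by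
  intro k
  induction k with
  | zero => intro h0 _ _; simp [h0]
  | succ k ih =>
    intro h0 hP ht
    rw [Finset.sum_range_succ]
    have ihk := ih h0 (fun i hi hik => hP i hi (by omega)) (fun i j hij hj => ht i j hij (by omega))
    have key : t k * P (k+1) ≤ t (k-1) * P k + t k * (P (k+1) - P k) := by
      have : 0 ≤ (t (k-1) - t k) * P k := by
        rcases Nat.eq_zero_or_pos k with rfl | hk
        · simp [h0]
        · have h1 : t k ≤ t (k-1) := ht (k-1) k (by omega) (by omega)
          have h2 : 0 ≤ P k := hP k hk (by omega)
          exact mul_nonneg (by linarith) h2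
      nlinarith [this]
    calc t (k+1-1) * P (k+1) = t k * P (k+1) := by norm_num
    _ ≤ t (k-1) * P k + t k * (P (k+1) - P k) := key
    _ ≤ _ := by linarith

lemma testvec_sum {T : Finset (Fin n)} {a b : Fin n} (hab : a ≠ b) (g : Fin n → ℝ) :
    ∑ j ∈ T, g j * (if j = a then 1 else if j = b then -1 else 0)
      = (if a ∈ T then g a else 0) - (if b ∈ T then g b else 0) := by
  have : ∀ j ∈ T, g j * (if j = a then (1:ℝ) else if j = b then -1 else 0)
      = (if j = a then g j else 0) + (if j = b then -g j else 0) := by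
    intro j _
    by_cases hja : j = a
    · subst hja
      simp [hab]
    · by_cases hjb : j = b
      · subst hjb; simp [hja]
      · simp [hja, hjb]
  rw [Finset.sum_congr rfl this, Finset.sum_add_distrib,
    Finset.sum_ite_eq' T a (fun j => g j), Finset.sum_ite_eq' T b (fun j => -g j)]
  ring_nf
  by_cases h1 : a ∈ T <;> by_cases h2 : b ∈ T <;> simp [h1, h2] <;> ring

lemma dual_ineq {L : List (Finset (Fin n))} (hPD : L.Pairwise Disjoint)
    {i j : ℕ} (hij : i ≤ j) (hj : j < L.length)
    {a b : Fin n} (ha : a ∈ L.getD i ∅) (hb : b ∈ L.getD j ∅) (hab : a ≠ b)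
    {y : Fin n → ℝ} (hdual : ∀ x ∈ plate L, 0 ≤ ∑ i, y i * x i) : y b ≤ y a := by
  have hi : i < L.length := lt_of_le_of_lt hij hj
  set x : Fin n → ℝ := fun c => if c = a then 1 else if c = b then -1 else 0 with hxdef
  have haU : a ∈ lUnion L := by
    rw [mem_lUnion]
    exact ⟨L.getD i ∅, by rw [List.getD_eq_getElem _ _ hi]; exact List.getElem_mem hi, ha⟩
  have hbU : b ∈ lUnion L := by
    rw [mem_lUnion]
    exact ⟨L.getD j ∅, by rw [List.getD_eq_getElem _ _ hj]; exact List.getElem_mem hj, hb⟩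
  have hsum : ∀ T : Finset (Fin n), ∑ c ∈ T, x c
      = (if a ∈ T then (1:ℝ) else 0) - (if b ∈ T then 1 else 0) := by
    intro T
    have := testvec_sum (T := T) hab (fun _ => (1:ℝ))
    simpa using this
  have hx : x ∈ plate L := by
    refine ⟨?_, ?_, ?_, ?_⟩
    · rw [hsum]; simp
    · intro c hc
      have hca : c ≠ a := fun h => hc (h ▸ haU)
      have hcb : c ≠ b := fun h => hc (h ▸ hbU)
      simp [hxdef, hca, hcb]
    · rw [hsum]; simp [haU, hbU]
    · intro m hm0 hmlen
      rw [hsum]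
      simp only [mem_lUnion_take hPD hi ha, mem_lUnion_take hPD hj hb]
      by_cases h1 : j < m
      · simp [h1, lt_of_le_of_lt hij h1]
      · by_cases h2 : i < m <;> simp [h1, h2]
  have := hdual x hx
  have heq : ∑ c, y c * x c = y a - y b := by
    rw [hxdef, testvec_sum hab y]
    simp
  linarith [heq ▸ this]

/-- Let `(S₁,…,S_k)` be an ordered set partition of a subset `S ⊆ {1,…,n}`.
The dual cone of the plate `[S₁,…,S_k]` inside `V₀ⁿ` consists of the `y ∈ V₀ⁿ` that are
constant on each block `S_i`, with value `t_i` on `S_i`, where `t₁ ≥ t₂ ≥ ⋯ ≥ t_k`, and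
whose coordinates outside `S` are arbitrary. -/
theorem statement_2 (n : ℕ) (J : Finset (Fin n)) (L : List (Finset (Fin n)))
    (hL : IsOSP J L) :
    {y : Fin n → ℝ | (∑ i, y i = 0) ∧ ∀ x ∈ plate L, 0 ≤ ∑ i, y i * x i} =
    {y : Fin n → ℝ | (∑ i, y i = 0) ∧ ∃ t : ℕ → ℝ,
      (∀ i, i < L.length → ∀ a ∈ L.getD i ∅, y a = t i) ∧
      (∀ i j, i ≤ j → j < L.length → t j ≤ t i)} := by
  obtain ⟨hNE, hPD, hJ⟩ := hL
  have hblockmem : ∀ i, i < L.length → L.getD i ∅ ∈ L := by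
    intro i hi
    rw [List.getD_eq_getElem _ _ hi]
    exact List.getElem_mem hi
  ext y
  simp only [Set.mem_setOf_eq]
  constructor
  · rintro ⟨hy0, hdual⟩
    refine ⟨hy0, ?_⟩
    set t : ℕ → ℝ := fun i =>
      if h : i < L.length then y (hNE _ (hblockmem i h)).choose else 0 with htdef
    refine ⟨t, ?_, ?_⟩
    · intro i hi a ha
      have hc := (hNE _ (hblockmem i hi)).choose_spec
      have h1 : y (hNE _ (hblockmem i hi)).choose ≤ y a := by
        by_cases hac : a = (hNE _ (hblockmem i hi)).choose
        · rw [hac]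
        · exact dual_ineq hPD le_rfl hi ha hc hac hdual
      have h2 : y a ≤ y (hNE _ (hblockmem i hi)).choose := by
        by_cases hac : a = (hNE _ (hblockmem i hi)).choose
        · rw [hac]
        · exact dual_ineq hPD le_rfl hi hc ha (Ne.symm hac) hdual
      simp only [htdef, dif_pos hi]
      linarith
    · intro i j hij hj
      have hi : i < L.length := lt_of_le_of_lt hij hj
      rcases eq_or_lt_of_le hij with rfl | hij'
      · exact le_rfl
      · have hci := (hNE _ (hblockmem i hi)).choose_spec
        have hcj := (hNE _ (hblockmem j hj)).choose_spec
        have hab : (hNE _ (hblockmem i hi)).choose ≠ (hNE _ (hblockmem j hj)).choose := by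
          intro heq
          have hd := pairwise_getElem hPD hij' hj
          exact Finset.disjoint_left.mp hd hci (heq ▸ hcj)
        have := dual_ineq hPD hij hj hci hcj hab hdual
        simp only [htdef, dif_pos hi, dif_pos hj]
        exact this
  · rintro ⟨hy0, t, htc, htm⟩
    refine ⟨hy0, ?_⟩
    rintro x ⟨hx0, hxout, hxJ, hxpos⟩
    set k := L.length with hk
    set P : ℕ → ℝ := fun m => ∑ j ∈ lUnion (L.take m), x j with hPdef
    have hP0 : P 0 = 0 := by simp [hPdef, lUnion]
    have hPk : P k = 0 := by
      simp only [hPdef, hk, List.take_length]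
      exact hxJ
    have hPpos : ∀ i, 0 < i → i ≤ k → 0 ≤ P i := by
      intro i hi0 hik
      rcases eq_or_lt_of_le hik with rfl | hlt
      · rw [hPk]
      · exact hxpos i hi0 hlt
    have habel := abel_ineq t P k hP0 hPpos htm
    rw [hPk, mul_zero] at habel
    have hsum1 : ∑ i, y i * x i = ∑ j ∈ lUnion L, y j * x j := by
      rw [Finset.sum_subset (Finset.subset_univ (lUnion L))
        (fun c _ hc => by rw [hxout c hc, mul_zero])]
    have hsum2 : ∑ j ∈ lUnion L, y j * x j
        = ∑ i ∈ Finset.range k, ∑ j ∈ L.getD i ∅, y j * x j := by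
      have h := sum_take_eq hPD (fun j => y j * x j) L.length le_rfl
      rw [List.take_length] at h
      exact h
    have hsum3 : ∀ i ∈ Finset.range k, ∑ j ∈ L.getD i ∅, y j * x j
        = t i * (P (i+1) - P i) := by
      intro i hi
      rw [Finset.mem_range] at hi
      have h1 : ∑ j ∈ L.getD i ∅, y j * x j = t i * ∑ j ∈ L.getD i ∅, x j := by
        rw [Finset.mul_sum]
        exact Finset.sum_congr rfl (fun j hj => by rw [htc i hi j hj])
      have h2 : P (i+1) - P i = ∑ j ∈ L.getD i ∅, x j := by
        simp only [hPdef]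
        rw [sum_take_succ hPD hi x]
        ring
      rw [h1, h2]
    rw [hsum1, hsum2, Finset.sum_congr rfl hsum3]
    exact le_trans habel le_rfl


end PlatesPaper
end

section
/- Fix a permutation σ = (σ₁,…,σₙ) of {1,…,n}, and let C_σ = {x ∈ V₀ⁿ : x_{σ_i} ≥ x_{σ_{i+1}} whenever σ_i < σ_{i+1}, and x_{σ_i} > x_{σ_{i+1}} whenever σ_i > σ_{i+1}}. Then the indicator function of C_σ equals ∑_π (−1)^{n−len(π)} [[π*]], where π ranges over the ordered set partitions (S₁,…,S_k) of {1,…,n} whose blocks are consecutive segments of the word (σ₁,…,σₙ) on which σ is strictly decreasing (equivalently, the set of breakpoints between blocks contains every ascent position i with σ_i < σ_{i+1}), and π* = [S₁,…,S_k]* is the face {x ∈ V₀ⁿ : x_a = x_b whenever a,b lie in the same block S_i, and x_a ≥ x_b whenever the block containing a precedes the block containing b}. -/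
open scoped Pointwise Classical

namespace PlatesPaper

lemma sum_neg_one_pow_q (S : Finset ℕ) :
    (∑ m ∈ S.powerset, (-1 : ℚ) ^ m.card) = if S = ∅ then 1 else 0 := by
  have h := Finset.sum_powerset_neg_one_pow_card (x := S)
  have h2 : ((∑ m ∈ S.powerset, (-1 : ℤ) ^ m.card : ℤ) : ℚ) = ((if S = ∅ then 1 else 0 : ℤ) : ℚ) := by
    rw [h]
  push_cast [apply_ite (fun z : ℤ => (z : ℚ))] at h2
  exact h2

lemma sum_interval (R L : Finset ℕ) (hL : L ⊆ R) :
    (∑ D ∈ R.powerset, if L ⊆ D then ((-1 : ℚ)) ^ (R.card - D.card) else 0)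
      = if L = R then 1 else 0 := by
  rw [← Finset.sum_filter]
  have hbij : ∑ D ∈ R.powerset.filter (fun D => L ⊆ D), ((-1:ℚ)) ^ (R.card - D.card)
      = ∑ E ∈ (R \ L).powerset, ((-1:ℚ)) ^ E.card := by
    refine Finset.sum_nbij' (fun D => R \ D) (fun E => R \ E) ?_ ?_ ?_ ?_ ?_
    · intro D hD
      simp only [Finset.mem_filter, Finset.mem_powerset] at hD ⊢
      exact Finset.sdiff_subset_sdiff le_rfl hD.2
    · intro E hE
      simp only [Finset.mem_filter, Finset.mem_powerset] at hE ⊢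
      constructor
      · exact Finset.sdiff_subset
      · intro a ha
        simp only [Finset.mem_sdiff]
        refine ⟨hL ha, fun haE => ?_⟩
        exact (Finset.mem_sdiff.1 (hE haE)).2 ha
    · intro D hD
      simp only [Finset.mem_filter, Finset.mem_powerset] at hD
      exact Finset.sdiff_sdiff_eq_self hD.1
    · intro E hE
      simp only [Finset.mem_powerset] at hE
      exact Finset.sdiff_sdiff_eq_self (hE.trans Finset.sdiff_subset)
    · intro D hD
      simp only [Finset.mem_filter, Finset.mem_powerset] at hD
      rw [Finset.card_sdiff_of_subset hD.1]
  rw [hbij, sum_neg_one_pow_q]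
  apply if_congr _ rfl rfl
  rw [Finset.sdiff_eq_empty_iff_subset]
  exact ⟨fun h => le_antisymm hL h, fun h => h.ge⟩


/-- The partially open Weyl chamber `C_σ ⊆ V₀ⁿ` attached to a permutation `σ`. -/
def chamber (n : ℕ) (σ : Equiv.Perm (Fin n)) : Set (Fin n → ℝ) :=
  {x | (∑ i, x i = 0) ∧ ∀ (i : ℕ) (h : i + 1 < n),
    (σ ⟨i, by omega⟩ < σ ⟨i + 1, h⟩ → x (σ ⟨i + 1, h⟩) ≤ x (σ ⟨i, by omega⟩)) ∧
    (σ ⟨i + 1, h⟩ < σ ⟨i, by omega⟩ → x (σ ⟨i + 1, h⟩) < x (σ ⟨i, by omega⟩))}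

/-- The face `π* = [S₁,…,S_k]*` of the reflection arrangement attached to the ordered set
partition of `{1,…,n}` whose blocks are the consecutive segments of the word
`(σ 0, …, σ (n−1))` determined by the set `D` of breakpoints (positions `i ∈ D` separate
two blocks; positions `i ∉ D` are internal to a block, where coordinates are equal).
By transitivity these conditions say exactly `x_a = x_b` for `a,b` in the same block and
`x_a ≥ x_b` when the block of `a` precedes the block of `b`. -/
def face (n : ℕ) (σ : Equiv.Perm (Fin n)) (D : Finset ℕ) : Set (Fin n → ℝ) :=
  {x | (∑ i, x i = 0) ∧ ∀ (i : ℕ) (h : i + 1 < n),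
    (i ∈ D → x (σ ⟨i + 1, h⟩) ≤ x (σ ⟨i, by omega⟩)) ∧
    (i ∉ D → x (σ ⟨i, by omega⟩) = x (σ ⟨i + 1, h⟩))}

/-- The indicator function of the partially open Weyl chamber `C_σ` is
`∑_π (−1)^{n−len(π)} [[π*]]`, the sum being over the ordered set partitions `π` whose blocks
are consecutive segments of `(σ₁,…,σₙ)` on which `σ` is strictly decreasing.  Such `π`
correspond bijectively to their sets `D` of breakpoints, which are the subsets of
`{0,…,n−2}` containing every ascent position of `σ`; then `len(π) = D.card + 1`. -/
theorem statement_5 (n : ℕ) (σ : Equiv.Perm (Fin n)) (x : Fin n → ℝ)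
    (hx : ∑ i, x i = 0) :
    ind (chamber n σ) x =
    ∑ D ∈ (Finset.range (n - 1)).powerset.filter
        (fun D => ∀ (i : ℕ) (h : i + 1 < n), σ ⟨i, by omega⟩ < σ ⟨i + 1, h⟩ → i ∈ D),
      (-1 : ℚ) ^ (n - (D.card + 1)) * ind (face n σ D) x := by

  classical
  by_cases hneg : ∃ (i : ℕ) (h : i + 1 < n),
      x (σ ⟨i, Nat.lt_of_succ_lt h⟩) < x (σ ⟨i + 1, h⟩)
  · obtain ⟨i, h, hlt⟩ := hneg
    have hij : (⟨i, Nat.lt_of_succ_lt h⟩ : Fin n) ≠ ⟨i + 1, h⟩ := by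
      simp [Fin.ext_iff]
    have hc0 : ind (chamber n σ) x = 0 := by
      rw [ind, if_neg]
      rintro ⟨-, h2⟩
      obtain ⟨ha, hd⟩ := h2 i h
      rcases lt_trichotomy (σ ⟨i, Nat.lt_of_succ_lt h⟩) (σ ⟨i + 1, h⟩) with hc | hc | hc
      · exact absurd (ha hc) (not_le.mpr hlt)
      · exact hij (σ.injective hc)
      · exact absurd (hd hc) (by linarith)
    rw [hc0]
    symm
    apply Finset.sum_eq_zero
    intro D _
    have hf0 : ind (face n σ D) x = 0 := by
      rw [ind, if_neg]
      rintro ⟨-, h2⟩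
      obtain ⟨h1, h2'⟩ := h2 i h
      by_cases hiD : i ∈ D
      · exact absurd (h1 hiD) (not_le.mpr hlt)
      · have := h2' hiD
        linarith
    rw [hf0, mul_zero]
  · push_neg at hneg
    have hpos : ∀ (i : ℕ) (h : i + 1 < n),
        x (σ ⟨i + 1, h⟩) ≤ x (σ ⟨i, Nat.lt_of_succ_lt h⟩) := hneg
    set R := Finset.range (n - 1) with hRdef
    set A : Finset ℕ := R.filter
      (fun i => ∃ h : i + 1 < n, σ ⟨i, Nat.lt_of_succ_lt h⟩ < σ ⟨i + 1, h⟩) with hA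
    set P : Finset ℕ := R.filter
      (fun i => ∃ h : i + 1 < n, x (σ ⟨i + 1, h⟩) < x (σ ⟨i, Nat.lt_of_succ_lt h⟩)) with hP
    have hmemR : ∀ i : ℕ, i ∈ R ↔ i + 1 < n := by
      intro i; rw [hRdef, Finset.mem_range]; omega
    have hAR : A ⊆ R := Finset.filter_subset _ _
    have hPR : P ⊆ R := Finset.filter_subset _ _
    have hface : ∀ D : Finset ℕ, x ∈ face n σ D ↔ P ⊆ D := by
      intro D
      constructor
      · intro hxf i hiP
        rw [hP, Finset.mem_filter] at hiP
        obtain ⟨hiR, h, hstrict⟩ := hiP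
        by_contra hiD
        have := (hxf.2 i h).2 hiD
        linarith
      · intro hPD
        refine ⟨hx, fun i h => ⟨fun _ => hpos i h, fun hiD => ?_⟩⟩
        have hiR : i ∈ R := (hmemR i).2 h
        have hiP : i ∉ P := fun hp => hiD (hPD hp)
        rw [hP, Finset.mem_filter] at hiP
        push_neg at hiP
        exact le_antisymm (hiP hiR h) (hpos i h)
    have hcham : x ∈ chamber n σ ↔ R ⊆ A ∪ P := by
      constructor
      · rintro ⟨-, h2⟩ i hiR
        have h : i + 1 < n := (hmemR i).1 hiR
        rcases lt_trichotomy (σ ⟨i, Nat.lt_of_succ_lt h⟩) (σ ⟨i + 1, h⟩) with hc | hc | hc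
        · exact Finset.mem_union_left _ (by rw [hA, Finset.mem_filter]; exact ⟨hiR, h, hc⟩)
        · exact absurd (σ.injective hc) (by simp [Fin.ext_iff])
        · exact Finset.mem_union_right _
            (by rw [hP, Finset.mem_filter]; exact ⟨hiR, h, (h2 i h).2 hc⟩)
      · intro hsub
        refine ⟨hx, fun i h => ⟨fun _ => hpos i h, fun hdesc => ?_⟩⟩
        have hiR : i ∈ R := (hmemR i).2 h
        rcases Finset.mem_union.1 (hsub hiR) with hiA | hiP
        · rw [hA, Finset.mem_filter] at hiA
          obtain ⟨-, h', hasc⟩ := hiA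
          exact absurd hasc (lt_asymm hdesc)
        · rw [hP, Finset.mem_filter] at hiP
          obtain ⟨-, h', hstrict⟩ := hiP
          exact hstrict
    have hcardR : R.card = n - 1 := Finset.card_range _
    rw [Finset.sum_filter]
    have hstep : ∀ D ∈ R.powerset,
        (if ∀ (i : ℕ) (h : i + 1 < n), σ ⟨i, by omega⟩ < σ ⟨i + 1, h⟩ → i ∈ D then
          (-1 : ℚ) ^ (n - (D.card + 1)) * ind (face n σ D) x else 0)
        = if A ∪ P ⊆ D then (-1 : ℚ) ^ (R.card - D.card) else 0 := by
      intro D hD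
      have hDR : D ⊆ R := Finset.mem_powerset.1 hD
      have hcard : D.card ≤ n - 1 := hcardR ▸ Finset.card_le_card hDR
      have hindf : ind (face n σ D) x = if P ⊆ D then 1 else 0 := by
        rw [ind]; exact if_congr (hface D) rfl rfl
      by_cases h1 : A ⊆ D
      · have hpred : ∀ (i : ℕ) (h : i + 1 < n),
            σ ⟨i, Nat.lt_of_succ_lt h⟩ < σ ⟨i + 1, h⟩ → i ∈ D := by
          intro i h hasc
          exact h1 (by rw [hA, Finset.mem_filter]; exact ⟨(hmemR i).2 h, h, hasc⟩)
        rw [if_pos hpred, hindf]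
        by_cases h2 : P ⊆ D
        · rw [if_pos h2, if_pos (Finset.union_subset h1 h2), mul_one]
          congr 1
          omega
        · rw [if_neg h2, mul_zero, if_neg (fun hc => h2 ((Finset.subset_union_right).trans hc))]
      · rw [if_neg, if_neg (fun hc => h1 ((Finset.subset_union_left).trans hc))]
        intro hpred
        apply h1
        intro i hiA
        rw [hA, Finset.mem_filter] at hiA
        obtain ⟨hiR, h, hasc⟩ := hiA
        exact hpred i h hasc
    rw [Finset.sum_congr rfl hstep, sum_interval R (A ∪ P) (Finset.union_subset hAR hPR)]
    rw [ind]
    apply if_congr _ rfl rfl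
    rw [hcham]
    exact ⟨fun hs => le_antisymm (Finset.union_subset hAR hPR) hs, fun he => he.ge⟩


end PlatesPaper
end
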